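/- Fix 2 ≤ t ≤ T, suppose γ̃_t(x_{1:t−1}) := ∫ γ̃_t(x_{1:t}) dμ(x_t) is finite for every x_{1:t−1} and positive for η_{t−1}-almost every x_{1:t−1}, and define the locally optimal proposal q_t*(x_t | x_{1:t−1}) = γ̃_t(x_{1:t}) / γ̃_t(x_{1:t−1}). Then for every Markov transition density q(x_t | x_{1:t−1}) (measurable, non-negative, integrating to 1 in x_t for every x_{1:t−1}), the Kullback–Leibler divergence (with values in [0, ∞]) decomposes as KL( η_{t−1}(x_{1:t−1}) q(x_t|x_{1:t−1}) ‖ η_t(x_{1:t}) ) = E_{η_{t−1}}[ KL( q(·|x_{1:t−1}) ‖ q_t*(·|x_{1:t−1}) ) ] + KL( η_{t−1}(x_{1:t−1}) q_t*(x_t|x_{1:t−1}) ‖ η_t(x_{1:t}) ). In particular, q_t* minimizes q ↦ KL(η_{t−1}·q ‖ η_t) over all Markov transition densities, and any minimizer q satisfies q(·|x_{1:t−1}) = q_t*(·|x_{1:t−1}) μ-almost everywhere, for η_{t−1}-almost every x_{1:t−1}. -/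

import Mathlib

open MeasureTheory Classical
open scoped ENNReal

namespace SMCTut

/-- Kullback–Leibler divergence, with values in `[0, ∞]`, between (probability)
densities `f` and `g` with respect to a common σ-finite measure `ν`:
`KL(f ‖ g) = ∫ f log(f/g) dν`, with value `+∞` when `f` is not absolutely continuous
with respect to `g` or when the integral diverges. -/
noncomputable def KL {X : Type*} [MeasurableSpace X] (ν : Measure X) (f g : X → ℝ) : ℝ≥0∞ :=
  if (∀ᵐ x ∂ν, g x = 0 → f x = 0) ∧ Integrable (fun x => f x * Real.log (f x / g x)) ν then
    ENNReal.ofReal (∫ x, f x * Real.log (f x / g x) ∂ν)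
  else ⊤

lemma sub_le_mul_log {q p : ℝ} (hq : 0 ≤ q) (hp : 0 ≤ p) (h : q ≠ 0 → p ≠ 0) :
    q - p ≤ q * Real.log (q / p) := by
  rcases eq_or_lt_of_le hq with h0 | hq'
  · simpa [← h0] using hp
  · have hp' : 0 < p := lt_of_le_of_ne hp (Ne.symm (h hq'.ne'))
    have h1 : Real.log (p / q) ≤ p / q - 1 := Real.log_le_sub_one_of_pos (div_pos hp' hq')
    have h2 : Real.log (q / p) = - Real.log (p / q) := by
      rw [← Real.log_inv]; congr 1; field_simp
    have h3 : q * (p / q) = p := by field_simp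
    nlinarith

lemma eq_of_mul_log_eq {q p : ℝ} (hq : 0 ≤ q) (hp : 0 ≤ p) (h : q ≠ 0 → p ≠ 0)
    (heq : q * Real.log (q / p) - (q - p) = 0) : q = p := by
  rcases eq_or_lt_of_le hq with h0 | hq'
  · rw [← h0] at heq ⊢
    simp only [zero_mul, zero_sub, sub_neg_eq_add, zero_add] at heq
    exact heq.symm
  · have hp' : 0 < p := lt_of_le_of_ne hp (Ne.symm (h hq'.ne'))
    by_contra hne
    have hne' : p / q ≠ 1 := by
      intro hh
      rw [div_eq_one_iff_eq hq'.ne'] at hh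
      exact hne hh.symm
    have h1 : Real.log (p / q) < p / q - 1 :=
      Real.log_lt_sub_one_of_pos (div_pos hp' hq') hne'
    have h2 : Real.log (q / p) = - Real.log (p / q) := by
      rw [← Real.log_inv]; congr 1; field_simp
    have h3 : q * (p / q) = p := by field_simp
    nlinarith

lemma integrable_of_lintegral_ne_top {X : Type*} [MeasurableSpace X] {ν : Measure X} {f : X → ℝ}
    (hfm : AEStronglyMeasurable f ν) (hf0 : 0 ≤ᵐ[ν] f)
    (h : ∫⁻ x, ENNReal.ofReal (f x) ∂ν ≠ ⊤) : Integrable f ν :=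
  ⟨hfm, (hasFiniteIntegral_iff_ofReal hf0).2 h.lt_top⟩

lemma integrable_of_integral_ne_zero {X : Type*} [MeasurableSpace X] {ν : Measure X} {f : X → ℝ}
    (h : ∫ x, f x ∂ν ≠ 0) : Integrable f ν := by
  by_contra hi; rw [integral_undef hi] at h; exact h rfl

lemma KL_eq_lintegral {X : Type*} [MeasurableSpace X] {ν : Measure X} {f g : X → ℝ}
    (hfm : Measurable f) (hgm : Measurable g)
    (hf0 : 0 ≤ᵐ[ν] f) (hg0 : 0 ≤ᵐ[ν] g)
    (hfi : Integrable f ν) (hgi : Integrable g ν)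
    (hfg : ∫ x, f x ∂ν = ∫ x, g x ∂ν)
    (hac : ∀ᵐ x ∂ν, g x = 0 → f x = 0) :
    KL ν f g = ∫⁻ x, ENNReal.ofReal (f x * Real.log (f x / g x) - (f x - g x)) ∂ν := by
  have hD0 : 0 ≤ᵐ[ν] fun x => f x * Real.log (f x / g x) - (f x - g x) := by
    filter_upwards [hac, hf0, hg0] with x h1 h2 h3
    exact sub_nonneg.2 (sub_le_mul_log h2 h3 (fun hf hg => hf (h1 hg)))
  have hDm : AEStronglyMeasurable (fun x => f x * Real.log (f x / g x) - (f x - g x)) ν :=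
    ((hfm.mul ((hfm.div hgm).log)).sub (hfm.sub hgm)).aestronglyMeasurable
  by_cases hI : Integrable (fun x => f x * Real.log (f x / g x)) ν
  · have hfgi : Integrable (fun x => f x - g x) ν := hfi.sub hgi
    have hDi : Integrable (fun x => f x * Real.log (f x / g x) - (f x - g x)) ν :=
      hI.sub hfgi
    rw [KL, if_pos ⟨hac, hI⟩, ← ofReal_integral_eq_lintegral_ofReal hDi hD0]
    congr 1
    rw [integral_sub hI hfgi, integral_sub hfi hgi, hfg]
    ring
  · rw [KL, if_neg (fun h => hI h.2)]
    symm
    by_contra hne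
    have hfgi : Integrable (fun x => f x - g x) ν := hfi.sub hgi
    have hDi : Integrable (fun x => f x * Real.log (f x / g x) - (f x - g x)) ν :=
      integrable_of_lintegral_ne_top hDm hD0 hne
    have : Integrable (fun x => f x * Real.log (f x / g x)) ν :=
      (hDi.add hfgi).congr (ae_of_all _ fun x => by simp)
    exact hI this

lemma lintegral_ofReal_add_integrable {X : Type*} [MeasurableSpace X] {ν : Measure X}
    {f e : X → ℝ} (hfm : AEStronglyMeasurable f ν) (hf0 : 0 ≤ᵐ[ν] f)
    (he : Integrable e ν) (hfe0 : 0 ≤ᵐ[ν] fun x => f x + e x) (hie : 0 ≤ ∫ x, e x ∂ν) :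
    ∫⁻ x, ENNReal.ofReal (f x + e x) ∂ν
      = (∫⁻ x, ENNReal.ofReal (f x) ∂ν) + ENNReal.ofReal (∫ x, e x ∂ν) := by
  by_cases hfi : Integrable f ν
  · have hfei : Integrable (fun x => f x + e x) ν := hfi.add he
    rw [← ofReal_integral_eq_lintegral_ofReal hfei hfe0,
      ← ofReal_integral_eq_lintegral_ofReal hfi hf0, integral_add hfi he,
      ENNReal.ofReal_add (integral_nonneg_of_ae hf0) hie]
  · have h1 : ∫⁻ x, ENNReal.ofReal (f x) ∂ν = ⊤ := by
      by_contra hne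
      exact hfi (integrable_of_lintegral_ne_top hfm hf0 hne)
    have h2 : ∫⁻ x, ENNReal.ofReal (f x + e x) ∂ν = ⊤ := by
      by_contra hne
      have hDi : Integrable (fun x => f x + e x) ν :=
        integrable_of_lintegral_ne_top (hfm.add he.aestronglyMeasurable) hfe0 hne
      have : Integrable f ν :=
        (hDi.sub he).congr (ae_of_all _ fun x => by simp)
      exact hfi this
    rw [h1, h2]
    simp

section
variable {E : Type*} [MeasurableSpace E] (μ : Measure E) [SigmaFinite μ] (n : ℕ)

/-- the snoc equivalence -/
noncomputable def Se : ((Fin n → E) × E) ≃ᵐ (Fin (n + 1) → E) :=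
  (MeasurableEquiv.prodComm : ((Fin n → E) × E) ≃ᵐ (E × (Fin n → E))).trans
    (MeasurableEquiv.piFinSuccAbove (fun _ => E) (Fin.last n)).symm

lemma Se_apply (p : (Fin n → E) × E) : Se (E := E) n p = Fin.snoc p.1 p.2 := by
  show (MeasurableEquiv.piFinSuccAbove (fun _ => E) (Fin.last n)).symm (p.2, p.1) = _
  simp [MeasurableEquiv.piFinSuccAbove, Fin.insertNth_last', Fin.snocEquiv]

lemma Se_mp :
    MeasurePreserving (Se (E := E) n)
      ((Measure.pi fun _ : Fin n => μ).prod μ) (Measure.pi fun _ : Fin (n + 1) => μ) := by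
  have h1 : MeasurePreserving (Prod.swap : (Fin n → E) × E → E × (Fin n → E))
      ((Measure.pi fun _ : Fin n => μ).prod μ) (μ.prod (Measure.pi fun _ : Fin n => μ)) :=
    ⟨measurable_swap, Measure.prod_swap⟩
  have h2 := (measurePreserving_piFinSuccAbove (fun _ : Fin (n + 1) => μ) (Fin.last n)).symm
  exact h2.comp h1

lemma measurable_init : Measurable (fun x : Fin (n + 1) → E => Fin.init x) :=
  measurable_pi_lambda _ fun _ => measurable_pi_apply _

lemma measurable_msnoc :
    Measurable (fun p : (Fin n → E) × E => (Fin.snoc p.1 p.2 : Fin (n+1) → E)) := by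
  have h := (Se (E := E) n).measurable
  have : (fun p : (Fin n → E) × E => (Fin.snoc p.1 p.2 : Fin (n+1) → E)) = ⇑(Se (E := E) n) := by
    ext1 p; rw [Se_apply]
  rw [this]; exact h

end

lemma KL_comp {X Y : Type*} [MeasurableSpace X] [MeasurableSpace Y]
    {ρX : Measure X} {ρY : Measure Y} (e : X ≃ᵐ Y) (h : MeasurePreserving e ρX ρY)
    {f g : Y → ℝ} (hf : Measurable f) (hg : Measurable g) :
    KL ρY f g = KL ρX (fun x => f (e x)) (fun x => g (e x)) := by
  have hmap : ρY = ρX.map e := h.map_eq.symm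
  have hms : MeasurableSet {y | g y = 0 → f y = 0} := by
    have hs : {y | g y = 0 → f y = 0} = {y | g y = 0}ᶜ ∪ {y | f y = 0} := by
      ext y; simp [imp_iff_not_or]
    rw [hs]
    exact ((hg (measurableSet_singleton 0)).compl).union (hf (measurableSet_singleton 0))
  have h1 : (∀ᵐ y ∂ρY, g y = 0 → f y = 0) ↔ ∀ᵐ x ∂ρX, g (e x) = 0 → f (e x) = 0 := by
    rw [hmap]
    exact ae_map_iff e.measurable.aemeasurable hms
  have h2 : Integrable (fun y => f y * Real.log (f y / g y)) ρY ↔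
      Integrable (fun x => f (e x) * Real.log (f (e x) / g (e x))) ρX := by
    rw [hmap]
    exact e.measurableEmbedding.integrable_map_iff
  have h3 : ∫ y, f y * Real.log (f y / g y) ∂ρY
      = ∫ x, f (e x) * Real.log (f (e x) / g (e x)) ∂ρX := by
    rw [hmap]
    exact e.measurableEmbedding.integral_map _
  rw [KL, KL]
  exact if_congr (and_congr h1 h2) (by rw [h3]) rfl


set_option maxHeartbeats 1000000 in
theorem kl_core {A B : Type*} [MeasurableSpace A] [MeasurableSpace B]
    {ρ : Measure A} {μ : Measure B} [SigmaFinite ρ] [SigmaFinite μ]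
    (γp : A → ℝ) (G Q qs : A × B → ℝ)
    (hγpm : Measurable γp) (hGm : Measurable G) (hQm : Measurable Q)
    (hγp0 : ∀ a, 0 ≤ γp a) (hG0 : ∀ z, 0 ≤ G z) (hQ0 : ∀ z, 0 ≤ Q z)
    (hγpi : Integrable γp ρ) (hGi : Integrable G (ρ.prod μ))
    {Zp Zc : ℝ} (hZp : Zp = ∫ a, γp a ∂ρ) (hZppos : 0 < Zp)
    (hZc : Zc = ∫ z, G z ∂(ρ.prod μ)) (hZcpos : 0 < Zc)
    (hmargfin : ∀ a, Integrable (fun b => G (a, b)) μ)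
    (hmargpos : ∀ᵐ a ∂ρ, γp a ≠ 0 → 0 < ∫ b, G (a, b) ∂μ)
    (hqs : ∀ z : A × B, qs z = G z / ∫ b, G (z.1, b) ∂μ)
    (hQprob : ∀ a, ∫ b, Q (a, b) ∂μ = 1) :
    (KL (ρ.prod μ) (fun z => γp z.1 / Zp * Q z) (fun z => G z / Zc)
      = (∫⁻ a, ENNReal.ofReal (γp a / Zp) *
            KL μ (fun b => Q (a, b)) (fun b => qs (a, b)) ∂ρ) +
        KL (ρ.prod μ) (fun z => γp z.1 / Zp * qs z) (fun z => G z / Zc)) ∧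
    (KL (ρ.prod μ) (fun z => γp z.1 / Zp * qs z) (fun z => G z / Zc)
      ≤ KL (ρ.prod μ) (fun z => γp z.1 / Zp * Q z) (fun z => G z / Zc)) ∧
    (KL (ρ.prod μ) (fun z => γp z.1 / Zp * Q z) (fun z => G z / Zc)
        = KL (ρ.prod μ) (fun z => γp z.1 / Zp * qs z) (fun z => G z / Zc) →
      KL (ρ.prod μ) (fun z => γp z.1 / Zp * qs z) (fun z => G z / Zc) ≠ ⊤ →
      ∀ᵐ a ∂ρ, γp a ≠ 0 → ∀ᵐ b ∂μ, Q (a, b) = qs (a, b)) := by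
  have hZp' : Zp ≠ 0 := hZppos.ne'
  have hZc' : Zc ≠ 0 := hZcpos.ne'
  set m : A → ℝ := fun a => ∫ b, G (a, b) ∂μ with hm_def
  have hm_meas : Measurable m :=
    hGm.stronglyMeasurable.integral_prod_right'.measurable
  have hm0 : ∀ a, 0 ≤ m a := fun a => integral_nonneg fun b => hG0 _
  have hqs_eq : qs = fun z => G z / m z.1 := funext fun z => hqs z
  have hqsm : Measurable qs := by
    rw [hqs_eq]; exact hGm.div (hm_meas.comp measurable_fst)
  have hqs0 : ∀ z, 0 ≤ qs z := fun z => by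
    rw [hqs]; exact div_nonneg (hG0 z) (hm0 z.1)
  have hqsint : ∀ a, Integrable (fun b => qs (a, b)) μ := fun a => by
    simp only [hqs_eq]; exact (hmargfin a).div_const _
  have hqsint1 : ∀ a, m a ≠ 0 → ∫ b, qs (a, b) ∂μ = 1 := fun a hma => by
    simp only [hqs_eq, integral_div]; exact div_self hma
  have hQint : ∀ a, Integrable (fun b => Q (a, b)) μ := fun a =>
    integrable_of_integral_ne_zero (by rw [hQprob a]; exact one_ne_zero)
  -- measurability of the main integrands
  have hfQm : Measurable fun z : A × B => γp z.1 / Zp * Q z :=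
    ((hγpm.comp measurable_fst).div_const _).mul hQm
  have hfSm : Measurable fun z : A × B => γp z.1 / Zp * qs z :=
    ((hγpm.comp measurable_fst).div_const _).mul hqsm
  have hgm : Measurable fun z : A × B => G z / Zc := hGm.div_const _
  have hfQ0 : ∀ z : A × B, 0 ≤ γp z.1 / Zp * Q z := fun z =>
    mul_nonneg (div_nonneg (hγp0 _) hZppos.le) (hQ0 z)
  have hfS0 : ∀ z : A × B, 0 ≤ γp z.1 / Zp * qs z := fun z =>
    mul_nonneg (div_nonneg (hγp0 _) hZppos.le) (hqs0 z)
  have hg0 : ∀ z : A × B, 0 ≤ G z / Zc := fun z => div_nonneg (hG0 z) hZcpos.le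
  -- integrability
  have hfQi : Integrable (fun z : A × B => γp z.1 / Zp * Q z) (ρ.prod μ) := by
    rw [integrable_prod_iff hfQm.aestronglyMeasurable]
    refine ⟨ae_of_all _ fun a => by simpa using (hQint a).const_mul (γp a / Zp), ?_⟩
    refine (hγpi.div_const Zp).congr (ae_of_all _ fun a => ?_)
    have : ∀ b, ‖γp a / Zp * Q (a, b)‖ = γp a / Zp * Q (a, b) := fun b =>
      Real.norm_of_nonneg (hfQ0 (a, b))
    simp only [this]
    rw [integral_const_mul, hQprob a, mul_one]
  have hratiole : ∀ a, m a / m a ≤ 1 := fun a => by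
    rcases eq_or_ne (m a) 0 with h | h
    · simp [h]
    · rw [div_self h]
  have hqsintval : ∀ a, ∫ b, qs (a, b) ∂μ = m a / m a := fun a => by
    simp only [hqs_eq, integral_div]; rfl
  have hfSi : Integrable (fun z : A × B => γp z.1 / Zp * qs z) (ρ.prod μ) := by
    rw [integrable_prod_iff hfSm.aestronglyMeasurable]
    refine ⟨ae_of_all _ fun a => by simpa using (hqsint a).const_mul (γp a / Zp), ?_⟩
    refine Integrable.mono (hγpi.div_const Zp) ?_ (ae_of_all _ fun a => ?_)
    · exact (hfSm.norm.stronglyMeasurable.integral_prod_right').aestronglyMeasurable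
    · have h1 : ∀ b, ‖γp a / Zp * qs (a, b)‖ = γp a / Zp * qs (a, b) := fun b =>
        Real.norm_of_nonneg (hfS0 (a, b))
      simp only [h1]
      rw [integral_const_mul, hqsintval a]
      rw [Real.norm_of_nonneg (mul_nonneg (div_nonneg (hγp0 a) hZppos.le)
          (div_nonneg (hm0 a) (hm0 a))), Real.norm_of_nonneg (div_nonneg (hγp0 a) hZppos.le)]
      exact mul_le_of_le_one_right (div_nonneg (hγp0 a) hZppos.le) (hratiole a)
  have hgi : Integrable (fun z : A × B => G z / Zc) (ρ.prod μ) := hGi.div_const _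
  -- integrals are all one
  have hintg : ∫ z, G z / Zc ∂(ρ.prod μ) = 1 := by
    rw [integral_div, ← hZc, div_self hZc']
  have hintfQ : ∫ z, γp z.1 / Zp * Q z ∂(ρ.prod μ) = 1 := by
    rw [integral_prod _ hfQi]
    have : ∀ a, ∫ b, γp a / Zp * Q (a, b) ∂μ = γp a / Zp := fun a => by
      rw [integral_const_mul, hQprob a, mul_one]
    simp only [this]
    rw [integral_div, ← hZp, div_self hZp']
  have hintfS : ∫ z, γp z.1 / Zp * qs z ∂(ρ.prod μ) = 1 := by
    rw [integral_prod _ hfSi]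
    have h1 : ∀ a, ∫ b, γp a / Zp * qs (a, b) ∂μ = γp a / Zp * (m a / m a) := fun a => by
      rw [integral_const_mul, hqsintval a]
    simp only [h1]
    have h2 : (fun a => γp a / Zp * (m a / m a)) =ᵐ[ρ] fun a => γp a / Zp := by
      filter_upwards [hmargpos] with a ha
      rcases eq_or_ne (γp a) 0 with h | h
      · simp [h]
      · rw [div_self (ha h).ne', mul_one]
    rw [integral_congr_ae h2, integral_div, ← hZp, div_self hZp']
  -- absolute continuity of the optimal coupling, pointwise
  have hacS : ∀ z : A × B, G z / Zc = 0 → γp z.1 / Zp * qs z = 0 := fun z hz => by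
    have hGz : G z = 0 := by
      rcases div_eq_zero_iff.1 hz with h | h
      · exact h
      · exact absurd h hZc'
    rw [hqs, hGz, zero_div, mul_zero]
  by_cases hAC : ∀ᵐ z ∂(ρ.prod μ), G z / Zc = 0 → γp z.1 / Zp * Q z = 0
  case neg =>
    -- absolute continuity fails: LHS is ⊤ and the conditional KL integral is ⊤
    have hL : KL (ρ.prod μ) (fun z => γp z.1 / Zp * Q z) (fun z => G z / Zc) = ⊤ := by
      rw [KL, if_neg]; exact fun h => hAC h.1
    have hsmeas : MeasurableSet {z : A × B | G z / Zc = 0 ∧ ¬ γp z.1 / Zp * Q z = 0} :=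
      (hgm (measurableSet_singleton 0)).inter (hfQm (measurableSet_singleton 0)).compl
    have hsne : (ρ.prod μ) {z : A × B | G z / Zc = 0 ∧ ¬ γp z.1 / Zp * Q z = 0} ≠ 0 := by
      intro h0
      exact hAC (by
        rw [ae_iff]
        convert h0 using 2
        ext z
        simp [Classical.not_imp])
    have hY : ¬ ∀ᵐ a ∂ρ, μ (Prod.mk a ⁻¹' {z : A × B | G z / Zc = 0 ∧ ¬ γp z.1 / Zp * Q z = 0}) = 0 := by
      intro h
      exact hsne ((Measure.measure_prod_null hsmeas).2 h)
    set Y : Set A := {a | μ (Prod.mk a ⁻¹' {z : A × B | G z / Zc = 0 ∧ ¬ γp z.1 / Zp * Q z = 0}) ≠ 0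
        ∧ (γp a ≠ 0 → 0 < m a)} with hY_def
    have hYmeas : MeasurableSet Y := by
      have h1 : MeasurableSet {a : A | μ (Prod.mk a ⁻¹' {z : A × B | G z / Zc = 0 ∧
          ¬ γp z.1 / Zp * Q z = 0}) ≠ 0} :=
        ((measurable_measure_prodMk_left hsmeas) (measurableSet_singleton 0)).compl
      have h2 : MeasurableSet {a : A | γp a ≠ 0 → 0 < m a} := by
        have he : {a | γp a ≠ 0 → 0 < m a} = {a | γp a = 0} ∪ {a | 0 < m a} := by
          ext a; simp [imp_iff_not_or]
        rw [he]
        exact (hγpm (measurableSet_singleton 0)).union (measurableSet_lt measurable_const hm_meas)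
      exact h1.inter h2
    have hYne : ρ Y ≠ 0 := by
      intro h0
      apply hY
      filter_upwards [hmargpos, measure_eq_zero_iff_ae_notMem.1 h0] with a h1 h2
      by_contra hne
      exact h2 ⟨hne, h1⟩
    have htop : ∀ a ∈ Y, ENNReal.ofReal (γp a / Zp) *
        KL μ (fun b => Q (a, b)) (fun b => qs (a, b)) = ⊤ := by
      intro a ha
      obtain ⟨hsl, hgood⟩ := ha
      obtain ⟨b₀, hb₀⟩ := nonempty_of_measure_ne_zero hsl
      have hγa : γp a ≠ 0 := by
        intro h
        exact hb₀.2 (by simp [h])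
      have hma : 0 < m a := hgood hγa
      have hKLtop : KL μ (fun b => Q (a, b)) (fun b => qs (a, b)) = ⊤ := by
        rw [KL, if_neg]
        rintro ⟨hac, -⟩
        rw [ae_iff] at hac
        apply hsl
        refine measure_mono_null ?_ hac
        intro b hb
        simp only [Set.mem_preimage, Set.mem_setOf_eq] at hb
        simp only [Set.mem_setOf_eq, Classical.not_imp]
        constructor
        · rw [hqs]
          have hGz : G (a, b) = 0 := by
            rcases div_eq_zero_iff.1 hb.1 with h | h
            · exact h
            · exact absurd h hZc'
          simp [hGz]
        · intro hq
          exact hb.2 (by rw [hq, mul_zero])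
      rw [hKLtop]
      refine ENNReal.mul_top ?_
      simp only [ne_eq, ENNReal.ofReal_eq_zero, not_le]
      exact div_pos (lt_of_le_of_ne (hγp0 a) (Ne.symm hγa)) hZppos
    have hItop : (∫⁻ a, ENNReal.ofReal (γp a / Zp) *
        KL μ (fun b => Q (a, b)) (fun b => qs (a, b)) ∂ρ) = ⊤ := by
      rw [eq_top_iff]
      calc (⊤ : ℝ≥0∞) = ⊤ * ρ Y := (ENNReal.top_mul hYne).symm
      _ = ∫⁻ _ in Y, ⊤ ∂ρ := (setLIntegral_const Y ⊤).symm
      _ = ∫⁻ a in Y, ENNReal.ofReal (γp a / Zp) *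
            KL μ (fun b => Q (a, b)) (fun b => qs (a, b)) ∂ρ :=
        (setLIntegral_congr_fun hYmeas (fun a ha => (htop a ha).symm))
      _ ≤ _ := setLIntegral_le_lintegral _ _
    refine ⟨by rw [hL, hItop, top_add], by rw [hL]; exact le_top, ?_⟩
    intro heq hne
    rw [heq] at hL
    exact absurd hL hne
  case pos =>
    have hqs' : ∀ z : A × B, qs z = G z / m z.1 := fun z => hqs z
    have hmargpos' : ∀ᵐ a ∂ρ, γp a ≠ 0 → 0 < m a := hmargpos
    -- lift `hmargpos` to the product measure
    have hmp' : ∀ᵐ z ∂(ρ.prod μ), γp z.1 ≠ 0 → 0 < m z.1 := by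
      have ht : ρ {a | ¬ (γp a ≠ 0 → 0 < m a)} = 0 := ae_iff.1 hmargpos'
      rw [ae_iff]
      have hsub : {z : A × B | ¬ (γp z.1 ≠ 0 → 0 < m z.1)}
          = {a | ¬ (γp a ≠ 0 → 0 < m a)} ×ˢ (Set.univ : Set B) := by
        ext z; simp [Set.mem_prod]
      rw [hsub, Measure.prod_prod, ht, zero_mul]
    -- the three nonnegative defect integrands
    have hDm : Measurable fun z : A × B =>
        γp z.1 / Zp * (Q z * Real.log (Q z / qs z) - (Q z - qs z)) :=
      ((hγpm.comp measurable_fst).div_const _).mul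
        ((hQm.mul (Real.measurable_log.comp (hQm.div hqsm))).sub (hQm.sub hqsm))
    have hDQm : Measurable fun z : A × B =>
        (γp z.1 / Zp * Q z) * Real.log ((γp z.1 / Zp * Q z) / (G z / Zc))
          - (γp z.1 / Zp * Q z - G z / Zc) :=
      (hfQm.mul (Real.measurable_log.comp (hfQm.div hgm))).sub (hfQm.sub hgm)
    have hDSm : Measurable fun z : A × B =>
        (γp z.1 / Zp * qs z) * Real.log ((γp z.1 / Zp * qs z) / (G z / Zc))
          - (γp z.1 / Zp * qs z - G z / Zc) :=
      (hfSm.mul (Real.measurable_log.comp (hfSm.div hgm))).sub (hfSm.sub hgm)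
    have hDS0 : ∀ z : A × B, 0 ≤ (γp z.1 / Zp * qs z) * Real.log ((γp z.1 / Zp * qs z) / (G z / Zc))
          - (γp z.1 / Zp * qs z - G z / Zc) := fun z =>
      sub_nonneg.2 (sub_le_mul_log (hfS0 z) (hg0 z) (fun h1 h2 => h1 (hacS z h2)))
    have hDQ0ae : ∀ᵐ z ∂(ρ.prod μ), 0 ≤ (γp z.1 / Zp * Q z) * Real.log ((γp z.1 / Zp * Q z) / (G z / Zc))
          - (γp z.1 / Zp * Q z - G z / Zc) := by
      filter_upwards [hAC] with z h1
      exact sub_nonneg.2 (sub_le_mul_log (hfQ0 z) (hg0 z) (fun hq hg => hq (h1 hg)))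
    have hD0ae : ∀ᵐ z ∂(ρ.prod μ), 0 ≤ γp z.1 / Zp * (Q z * Real.log (Q z / qs z) - (Q z - qs z)) := by
      filter_upwards [hAC, hmp'] with z h1 h2
      rcases eq_or_ne (γp z.1) 0 with hγ | hγ
      · simp [hγ]
      · refine mul_nonneg (div_nonneg (hγp0 _) hZppos.le) ?_
        refine sub_nonneg.2 (sub_le_mul_log (hQ0 z) (hqs0 z) ?_)
        intro hQz hqsz
        have hmz : m z.1 ≠ 0 := (h2 hγ).ne'
        rw [hqs' z] at hqsz
        have hGz : G z = 0 := by
          rcases div_eq_zero_iff.1 hqsz with h | h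
          · exact h
          · exact absurd h hmz
        have hzero := h1 (by rw [hGz, zero_div])
        rcases mul_eq_zero.1 hzero with h | h
        · exact (div_ne_zero hγ hZp') h
        · exact hQz h
    -- the two global KL values as lintegrals of nonnegative defects
    have hKL_L : KL (ρ.prod μ) (fun z => γp z.1 / Zp * Q z) (fun z => G z / Zc)
        = ∫⁻ z, ENNReal.ofReal ((γp z.1 / Zp * Q z) * Real.log ((γp z.1 / Zp * Q z) / (G z / Zc))
            - (γp z.1 / Zp * Q z - G z / Zc)) ∂(ρ.prod μ) :=
      KL_eq_lintegral hfQm hgm (ae_of_all _ hfQ0) (ae_of_all _ hg0) hfQi hgi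
        (by rw [hintfQ, hintg]) hAC
    have hKL_R : KL (ρ.prod μ) (fun z => γp z.1 / Zp * qs z) (fun z => G z / Zc)
        = ∫⁻ z, ENNReal.ofReal ((γp z.1 / Zp * qs z) * Real.log ((γp z.1 / Zp * qs z) / (G z / Zc))
            - (γp z.1 / Zp * qs z - G z / Zc)) ∂(ρ.prod μ) :=
      KL_eq_lintegral hfSm hgm (ae_of_all _ hfS0) (ae_of_all _ hg0) hfSi hgi
        (by rw [hintfS, hintg]) (ae_of_all _ hacS)
    -- slice versions of the a.e. facts
    have hACslice : ∀ᵐ a ∂ρ, ∀ᵐ b ∂μ, (G (a, b) / Zc = 0 → γp a / Zp * Q (a, b) = 0) :=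
      Measure.ae_ae_of_ae_prod hAC
    have hD0slice : ∀ᵐ a ∂ρ, ∀ᵐ b ∂μ,
        0 ≤ γp a / Zp * (Q (a, b) * Real.log (Q (a, b) / qs (a, b)) - (Q (a, b) - qs (a, b))) :=
      Measure.ae_ae_of_ae_prod hD0ae
    have hDQ0slice : ∀ᵐ a ∂ρ, ∀ᵐ b ∂μ,
        0 ≤ (γp a / Zp * Q (a, b)) * Real.log ((γp a / Zp * Q (a, b)) / (G (a, b) / Zc))
          - (γp a / Zp * Q (a, b) - G (a, b) / Zc) :=
      Measure.ae_ae_of_ae_prod hDQ0ae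
    -- Step 3: the conditional KL lintegral equals the lintegral of the conditional defect
    have hI : (∫⁻ a, ENNReal.ofReal (γp a / Zp) *
          KL μ (fun b => Q (a, b)) (fun b => qs (a, b)) ∂ρ)
        = ∫⁻ z, ENNReal.ofReal (γp z.1 / Zp *
            (Q z * Real.log (Q z / qs z) - (Q z - qs z))) ∂(ρ.prod μ) := by
      rw [lintegral_prod _ hDm.ennreal_ofReal.aemeasurable]
      refine lintegral_congr_ae ?_
      filter_upwards [hmargpos', hACslice] with a hma hacb
      rcases eq_or_ne (γp a) 0 with hγ | hγ
      · simp [hγ]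
      · have hma' : 0 < m a := hma hγ
        have hKLa : KL μ (fun b => Q (a, b)) (fun b => qs (a, b))
            = ∫⁻ b, ENNReal.ofReal (Q (a, b) * Real.log (Q (a, b) / qs (a, b))
                - (Q (a, b) - qs (a, b))) ∂μ := by
          refine KL_eq_lintegral (hQm.comp measurable_prodMk_left)
            (hqsm.comp measurable_prodMk_left) (ae_of_all _ fun b => hQ0 _)
            (ae_of_all _ fun b => hqs0 _) (hQint a) (hqsint a)
            (by rw [hQprob a, hqsint1 a hma'.ne']) ?_
          filter_upwards [hacb] with b hb hqsb
          rw [hqs' (a, b)] at hqsb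
          have hGz : G (a, b) = 0 := by
            rcases div_eq_zero_iff.1 hqsb with h | h
            · exact h
            · exact absurd h hma'.ne'
          have hzero := hb (by rw [hGz, zero_div])
          rcases mul_eq_zero.1 hzero with h | h
          · exact absurd h (div_ne_zero hγ hZp')
          · exact h
        rw [hKLa, ← lintegral_const_mul' _ _ ENNReal.ofReal_ne_top]
        refine lintegral_congr fun b => ?_
        rw [← ENNReal.ofReal_mul (div_nonneg (hγp0 a) hZppos.le)]
    -- Step 4: the chain rule for the defect lintegrals
    have hsplit : (∫⁻ z, ENNReal.ofReal ((γp z.1 / Zp * Q z) * Real.log ((γp z.1 / Zp * Q z) / (G z / Zc))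
            - (γp z.1 / Zp * Q z - G z / Zc)) ∂(ρ.prod μ))
        = (∫⁻ z, ENNReal.ofReal (γp z.1 / Zp *
            (Q z * Real.log (Q z / qs z) - (Q z - qs z))) ∂(ρ.prod μ))
          + ∫⁻ z, ENNReal.ofReal ((γp z.1 / Zp * qs z) * Real.log ((γp z.1 / Zp * qs z) / (G z / Zc))
            - (γp z.1 / Zp * qs z - G z / Zc)) ∂(ρ.prod μ) := by
      rw [lintegral_prod _ hDQm.ennreal_ofReal.aemeasurable,
        lintegral_prod _ hDm.ennreal_ofReal.aemeasurable,
        lintegral_prod _ hDSm.ennreal_ofReal.aemeasurable,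
        ← lintegral_add_left hDm.ennreal_ofReal.lintegral_prod_right']
      refine lintegral_congr_ae ?_
      filter_upwards [hmargpos', hACslice, hD0slice, hDQ0slice] with a hma hacb hD0b hDQ0b
      rcases eq_or_ne (γp a) 0 with hγ | hγ
      · have hz1 : (∫⁻ b, ENNReal.ofReal (γp (a, b).1 / Zp *
            (Q (a, b) * Real.log (Q (a, b) / qs (a, b)) - (Q (a, b) - qs (a, b)))) ∂μ) = 0 := by
          have : ∀ b : B, ENNReal.ofReal (γp (a, b).1 / Zp *
              (Q (a, b) * Real.log (Q (a, b) / qs (a, b)) - (Q (a, b) - qs (a, b)))) = 0 := by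
            intro b; simp [hγ]
          simp only [this, lintegral_const, zero_mul]
        rw [hz1, zero_add]
        refine lintegral_congr fun b => ?_
        congr 1
        simp only [hγ, zero_div, zero_mul]
      · have hma' : 0 < m a := hma hγ
        have hγpos : 0 < γp a := lt_of_le_of_ne (hγp0 a) (Ne.symm hγ)
        have hγq : 0 < γp a / Zp := div_pos hγpos hZppos
        -- the pointwise chain rule identity
        have hkey : ∀ᵐ b ∂μ, (γp (a, b).1 / Zp * Q (a, b)) *
              Real.log ((γp (a, b).1 / Zp * Q (a, b)) / (G (a, b) / Zc))
              - (γp (a, b).1 / Zp * Q (a, b) - G (a, b) / Zc)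
            = (γp (a, b).1 / Zp * (Q (a, b) * Real.log (Q (a, b) / qs (a, b))
                - (Q (a, b) - qs (a, b))))
              + (γp a / Zp * Q (a, b) * Real.log (γp a * Zc / (Zp * m a))
                - γp a / Zp * qs (a, b) + G (a, b) / Zc) := by
          filter_upwards [hacb] with b hb
          rcases eq_or_ne (Q (a, b)) 0 with hQz | hQz
          · rw [hQz]; ring
          · have hGz : G (a, b) ≠ 0 := by
              intro h0
              rcases mul_eq_zero.1 (hb (by rw [h0, zero_div])) with h | h
              · exact hγq.ne' h
              · exact hQz h
            have hqsz : qs (a, b) = G (a, b) / m a := hqs' (a, b)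
            have hGpos : 0 < G (a, b) := lt_of_le_of_ne (hG0 _) (Ne.symm hGz)
            have hqspos : 0 < qs (a, b) := by rw [hqsz]; exact div_pos hGpos hma'
            have hQpos : 0 < Q (a, b) := lt_of_le_of_ne (hQ0 _) (Ne.symm hQz)
            have harg : (γp a / Zp * Q (a, b)) / (G (a, b) / Zc)
                = (Q (a, b) / qs (a, b)) * (γp a * Zc / (Zp * m a)) := by
              rw [hqsz]; field_simp
            rw [harg, Real.log_mul (div_pos hQpos hqspos).ne'
              (by positivity : (0:ℝ) < γp a * Zc / (Zp * m a)).ne']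
            ring
        -- integrability and value of the shift term
        have heint : Integrable (fun b => γp a / Zp * Q (a, b) * Real.log (γp a * Zc / (Zp * m a))
            - γp a / Zp * qs (a, b) + G (a, b) / Zc) μ := by
          refine Integrable.add (Integrable.sub ?_ ((hqsint a).const_mul _))
            ((hmargfin a).div_const _)
          exact ((hQint a).const_mul (γp a / Zp * Real.log (γp a * Zc / (Zp * m a)))).congr
            (ae_of_all _ fun b => by ring)
        have hw : ∫ b, (γp a / Zp * Q (a, b) * Real.log (γp a * Zc / (Zp * m a))
              - γp a / Zp * qs (a, b) + G (a, b) / Zc) ∂μ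
            = γp a / Zp * Real.log (γp a * Zc / (Zp * m a)) - γp a / Zp + m a / Zc := by
          have hsub : Integrable (fun b => γp a / Zp * Q (a, b) * Real.log (γp a * Zc / (Zp * m a))
              - γp a / Zp * qs (a, b)) μ := by
            refine Integrable.sub ?_ ((hqsint a).const_mul _)
            exact ((hQint a).const_mul (γp a / Zp * Real.log (γp a * Zc / (Zp * m a)))).congr
              (ae_of_all _ fun b => by ring)
          rw [integral_add hsub ((hmargfin a).div_const _)]
          have h2 : Integrable (fun b => γp a / Zp * Q (a, b)
              * Real.log (γp a * Zc / (Zp * m a))) μ :=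
            ((hQint a).const_mul (γp a / Zp * Real.log (γp a * Zc / (Zp * m a)))).congr
              (ae_of_all _ fun b => by ring)
          rw [integral_sub h2 ((hqsint a).const_mul _)]
          have h3 : ∫ b, γp a / Zp * Q (a, b) * Real.log (γp a * Zc / (Zp * m a)) ∂μ
              = γp a / Zp * Real.log (γp a * Zc / (Zp * m a)) := by
            rw [show (fun b => γp a / Zp * Q (a, b) * Real.log (γp a * Zc / (Zp * m a)))
                = fun b => (γp a / Zp * Real.log (γp a * Zc / (Zp * m a))) * Q (a, b) from
                funext fun b => by ring]
            rw [integral_const_mul, hQprob a, mul_one]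
          have h4 : ∫ b, γp a / Zp * qs (a, b) ∂μ = γp a / Zp := by
            rw [integral_const_mul, hqsint1 a hma'.ne', mul_one]
          have h5 : ∫ b, G (a, b) / Zc ∂μ = m a / Zc := integral_div _ _
          rw [h3, h4, h5]
        -- the optimal-coupling defect slice: pointwise form, integrability, value
        have hDSpt : ∀ b : B, (γp (a, b).1 / Zp * qs (a, b)) *
              Real.log ((γp (a, b).1 / Zp * qs (a, b)) / (G (a, b) / Zc))
              - (γp (a, b).1 / Zp * qs (a, b) - G (a, b) / Zc)
            = γp a / Zp * qs (a, b) * Real.log (γp a * Zc / (Zp * m a))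
              - γp a / Zp * qs (a, b) + G (a, b) / Zc := by
          intro b
          rcases eq_or_ne (G (a, b)) 0 with hGz | hGz
          · have hqsz : qs (a, b) = 0 := by rw [hqs' (a, b), hGz, zero_div]
            rw [hqsz, hGz]; ring
          · have hqsz : qs (a, b) = G (a, b) / m a := hqs' (a, b)
            have hGpos : 0 < G (a, b) := lt_of_le_of_ne (hG0 _) (Ne.symm hGz)
            have hqspos : 0 < qs (a, b) := by rw [hqsz]; exact div_pos hGpos hma'
            have harg : (γp a / Zp * qs (a, b)) / (G (a, b) / Zc) = γp a * Zc / (Zp * m a) := by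
              rw [hqsz]; field_simp
            rw [harg]; ring
        have hDSint : Integrable (fun b => (γp (a, b).1 / Zp * qs (a, b)) *
              Real.log ((γp (a, b).1 / Zp * qs (a, b)) / (G (a, b) / Zc))
              - (γp (a, b).1 / Zp * qs (a, b) - G (a, b) / Zc)) μ := by
          refine Integrable.congr ?_ (ae_of_all _ fun b => (hDSpt b).symm)
          refine Integrable.add (Integrable.sub ?_ ((hqsint a).const_mul _))
            ((hmargfin a).div_const _)
          exact ((hqsint a).const_mul (γp a / Zp * Real.log (γp a * Zc / (Zp * m a)))).congr
            (ae_of_all _ fun b => by ring)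
        have hDSval : ∫ b, ((γp (a, b).1 / Zp * qs (a, b)) *
              Real.log ((γp (a, b).1 / Zp * qs (a, b)) / (G (a, b) / Zc))
              - (γp (a, b).1 / Zp * qs (a, b) - G (a, b) / Zc)) ∂μ
            = γp a / Zp * Real.log (γp a * Zc / (Zp * m a)) - γp a / Zp + m a / Zc := by
          rw [integral_congr_ae (ae_of_all _ hDSpt)]
          have hsub : Integrable (fun b => γp a / Zp * qs (a, b) * Real.log (γp a * Zc / (Zp * m a))
              - γp a / Zp * qs (a, b)) μ := by
            refine Integrable.sub ?_ ((hqsint a).const_mul _)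
            exact ((hqsint a).const_mul (γp a / Zp * Real.log (γp a * Zc / (Zp * m a)))).congr
              (ae_of_all _ fun b => by ring)
          rw [integral_add hsub ((hmargfin a).div_const _)]
          have h2 : Integrable (fun b => γp a / Zp * qs (a, b)
              * Real.log (γp a * Zc / (Zp * m a))) μ :=
            ((hqsint a).const_mul (γp a / Zp * Real.log (γp a * Zc / (Zp * m a)))).congr
              (ae_of_all _ fun b => by ring)
          rw [integral_sub h2 ((hqsint a).const_mul _)]
          have h3 : ∫ b, γp a / Zp * qs (a, b) * Real.log (γp a * Zc / (Zp * m a)) ∂μ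
              = γp a / Zp * Real.log (γp a * Zc / (Zp * m a)) := by
            rw [show (fun b => γp a / Zp * qs (a, b) * Real.log (γp a * Zc / (Zp * m a)))
                = fun b => (γp a / Zp * Real.log (γp a * Zc / (Zp * m a))) * qs (a, b) from
                funext fun b => by ring]
            rw [integral_const_mul, hqsint1 a hma'.ne', mul_one]
          have h4 : ∫ b, γp a / Zp * qs (a, b) ∂μ = γp a / Zp := by
            rw [integral_const_mul, hqsint1 a hma'.ne', mul_one]
          have h5 : ∫ b, G (a, b) / Zc ∂μ = m a / Zc := integral_div _ _
          rw [h3, h4, h5]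
        have hie : 0 ≤ ∫ b, (γp a / Zp * Q (a, b) * Real.log (γp a * Zc / (Zp * m a))
              - γp a / Zp * qs (a, b) + G (a, b) / Zc) ∂μ := by
          rw [hw, ← hDSval]
          exact integral_nonneg fun b => hDS0 (a, b)
        -- combine via the shift lemma
        calc (∫⁻ b, ENNReal.ofReal ((γp (a, b).1 / Zp * Q (a, b)) *
              Real.log ((γp (a, b).1 / Zp * Q (a, b)) / (G (a, b) / Zc))
              - (γp (a, b).1 / Zp * Q (a, b) - G (a, b) / Zc)) ∂μ)
            = ∫⁻ b, ENNReal.ofReal ((γp (a, b).1 / Zp * (Q (a, b) * Real.log (Q (a, b) / qs (a, b))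
                - (Q (a, b) - qs (a, b))))
              + (γp a / Zp * Q (a, b) * Real.log (γp a * Zc / (Zp * m a))
                - γp a / Zp * qs (a, b) + G (a, b) / Zc)) ∂μ := by
              refine lintegral_congr_ae ?_
              filter_upwards [hkey] with b hb
              rw [hb]
          _ = (∫⁻ b, ENNReal.ofReal (γp (a, b).1 / Zp * (Q (a, b) * Real.log (Q (a, b) / qs (a, b))
                - (Q (a, b) - qs (a, b)))) ∂μ)
              + ENNReal.ofReal (∫ b, (γp a / Zp * Q (a, b) * Real.log (γp a * Zc / (Zp * m a))
                - γp a / Zp * qs (a, b) + G (a, b) / Zc) ∂μ) := by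
              refine lintegral_ofReal_add_integrable
                ((hDm.comp measurable_prodMk_left).aestronglyMeasurable) hD0b heint ?_ hie
              filter_upwards [hkey, hDQ0b] with b h1 h2
              rw [← h1]
              exact h2
          _ = (∫⁻ b, ENNReal.ofReal (γp (a, b).1 / Zp * (Q (a, b) * Real.log (Q (a, b) / qs (a, b))
                - (Q (a, b) - qs (a, b)))) ∂μ)
              + ∫⁻ b, ENNReal.ofReal ((γp (a, b).1 / Zp * qs (a, b)) *
                Real.log ((γp (a, b).1 / Zp * qs (a, b)) / (G (a, b) / Zc))
                - (γp (a, b).1 / Zp * qs (a, b) - G (a, b) / Zc)) ∂μ := by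
              rw [← ofReal_integral_eq_lintegral_ofReal hDSint
                (ae_of_all _ fun b => hDS0 (a, b)), hDSval, hw]
    -- assemble
    have hpart1 : KL (ρ.prod μ) (fun z => γp z.1 / Zp * Q z) (fun z => G z / Zc)
        = (∫⁻ a, ENNReal.ofReal (γp a / Zp) *
              KL μ (fun b => Q (a, b)) (fun b => qs (a, b)) ∂ρ) +
          KL (ρ.prod μ) (fun z => γp z.1 / Zp * qs z) (fun z => G z / Zc) := by
      rw [hKL_L, hKL_R, hI, hsplit]
    refine ⟨hpart1, by rw [hpart1]; exact self_le_add_left _ _, ?_⟩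
    intro heq hne
    have hIzero : (∫⁻ z, ENNReal.ofReal (γp z.1 / Zp *
        (Q z * Real.log (Q z / qs z) - (Q z - qs z))) ∂(ρ.prod μ)) = 0 := by
      have h2 := hpart1.symm.trans heq
      rw [hI] at h2
      have h3 : (∫⁻ z, ENNReal.ofReal (γp z.1 / Zp *
          (Q z * Real.log (Q z / qs z) - (Q z - qs z))) ∂(ρ.prod μ))
          + KL (ρ.prod μ) (fun z => γp z.1 / Zp * qs z) (fun z => G z / Zc)
          = 0 + KL (ρ.prod μ) (fun z => γp z.1 / Zp * qs z) (fun z => G z / Zc) := by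
        rw [zero_add, h2]
      exact (ENNReal.add_left_inj hne).1 h3
    have hDzero : ∀ᵐ z ∂(ρ.prod μ), γp z.1 / Zp *
        (Q z * Real.log (Q z / qs z) - (Q z - qs z)) = 0 := by
      have h4 := (lintegral_eq_zero_iff hDm.ennreal_ofReal).1 hIzero
      filter_upwards [h4, hD0ae] with z h5 h6
      have : ENNReal.ofReal (γp z.1 / Zp * (Q z * Real.log (Q z / qs z) - (Q z - qs z))) = 0 := h5
      exact le_antisymm (ENNReal.ofReal_eq_zero.1 this) h6
    have hDzs : ∀ᵐ a ∂ρ, ∀ᵐ b ∂μ, γp a / Zp *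
        (Q (a, b) * Real.log (Q (a, b) / qs (a, b)) - (Q (a, b) - qs (a, b))) = 0 :=
      Measure.ae_ae_of_ae_prod hDzero
    filter_upwards [hmargpos', hACslice, hDzs] with a hma hacb hDb
    intro hγ
    have hma' : 0 < m a := hma hγ
    filter_upwards [hacb, hDb] with b hb hDzb
    have hX : Q (a, b) * Real.log (Q (a, b) / qs (a, b)) - (Q (a, b) - qs (a, b)) = 0 := by
      rcases mul_eq_zero.1 hDzb with h | h
      · exact absurd h (div_ne_zero hγ hZp')
      · exact h
    refine eq_of_mul_log_eq (hQ0 _) (hqs0 _) ?_ hX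
    intro hQz hqsz
    rw [hqs' (a, b)] at hqsz
    have hGz : G (a, b) = 0 := by
      rcases div_eq_zero_iff.1 hqsz with h | h
      · exact h
      · exact absurd h hma'.ne'
    have hzero := hb (by rw [hGz, zero_div])
    rcases mul_eq_zero.1 hzero with h | h
    · exact absurd h (div_ne_zero hγ hZp')
    · exact hQz h

/-- **The locally optimal proposal distribution** (Proposition 1): for `2 ≤ t ≤ T`
(encoded as dimensions `n` and `n+1` with `1 ≤ n`), the KL divergence from
`η_{t-1} ⊗ q` to `η_t` decomposes as the expected conditional KL divergence from `q`
to the locally optimal proposal `q_t*` plus the KL divergence from `η_{t-1} ⊗ q_t*`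
to `η_t`; in particular `q_t*` is a minimizer, and every minimizer agrees with
`q_t*` almost everywhere (when the minimal value is finite). -/
theorem locally_optimal_proposal_kl_decomposition
    {E : Type*} [MeasurableSpace E] (μ : Measure E) [SigmaFinite μ]
    (n : ℕ) (hn : 1 ≤ n)
    (γc : (Fin (n + 1) → E) → ℝ) (γp : (Fin n → E) → ℝ)
    (hγcmeas : Measurable γc) (hγpmeas : Measurable γp)
    (hγcnonneg : ∀ x, 0 ≤ γc x) (hγpnonneg : ∀ x, 0 ≤ γp x)
    (hγcint : Integrable γc (Measure.pi fun _ : Fin (n + 1) => μ))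
    (hγpint : Integrable γp (Measure.pi fun _ : Fin n => μ))
    (Zc Zp : ℝ)
    (hZc : Zc = ∫ x, γc x ∂(Measure.pi fun _ : Fin (n + 1) => μ)) (hZcpos : 0 < Zc)
    (hZp : Zp = ∫ x, γp x ∂(Measure.pi fun _ : Fin n => μ)) (hZppos : 0 < Zp)
    -- the marginal `γ̃_t(x_{1:t-1}) = ∫ γ̃_t(x_{1:t}) dμ(x_t)` is finite everywhere
    (hmargfin : ∀ x : Fin n → E, Integrable (fun ξ => γc (Fin.snoc x ξ)) μ)
    -- and positive `η_{t-1}`-almost everywhere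
    (hmargpos : ∀ᵐ x ∂(Measure.pi fun _ : Fin n => μ), γp x ≠ 0 →
        0 < ∫ ξ, γc (Fin.snoc x ξ) ∂μ)
    -- the locally optimal proposal `q_t*(x_t | x_{1:t-1}) = γ̃_t(x_{1:t}) / γ̃_t(x_{1:t-1})`
    (qstar : (Fin (n + 1) → E) → ℝ)
    (hqstar : ∀ x : Fin (n + 1) → E,
        qstar x = γc x / ∫ ξ, γc (Fin.snoc (Fin.init x) ξ) ∂μ)
    -- an arbitrary Markov transition density
    (Q : (Fin (n + 1) → E) → ℝ)
    (hQmeas : Measurable Q) (hQnonneg : ∀ x, 0 ≤ Q x)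
    (hQprob : ∀ x : Fin n → E, ∫ ξ, Q (Fin.snoc x ξ) ∂μ = 1) :
    (KL (Measure.pi fun _ : Fin (n + 1) => μ)
        (fun x => γp (Fin.init x) / Zp * Q x) (fun x => γc x / Zc)
      = (∫⁻ x, ENNReal.ofReal (γp x / Zp) *
            KL μ (fun ξ => Q (Fin.snoc x ξ)) (fun ξ => qstar (Fin.snoc x ξ))
            ∂(Measure.pi fun _ : Fin n => μ)) +
        KL (Measure.pi fun _ : Fin (n + 1) => μ)
          (fun x => γp (Fin.init x) / Zp * qstar x) (fun x => γc x / Zc)) ∧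
    (KL (Measure.pi fun _ : Fin (n + 1) => μ)
        (fun x => γp (Fin.init x) / Zp * qstar x) (fun x => γc x / Zc)
      ≤ KL (Measure.pi fun _ : Fin (n + 1) => μ)
          (fun x => γp (Fin.init x) / Zp * Q x) (fun x => γc x / Zc)) ∧
    (KL (Measure.pi fun _ : Fin (n + 1) => μ)
          (fun x => γp (Fin.init x) / Zp * Q x) (fun x => γc x / Zc)
        = KL (Measure.pi fun _ : Fin (n + 1) => μ)
            (fun x => γp (Fin.init x) / Zp * qstar x) (fun x => γc x / Zc) →
      KL (Measure.pi fun _ : Fin (n + 1) => μ)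
          (fun x => γp (Fin.init x) / Zp * qstar x) (fun x => γc x / Zc) ≠ ⊤ →
      ∀ᵐ x ∂(Measure.pi fun _ : Fin n => μ), γp x ≠ 0 →
        ∀ᵐ ξ ∂μ, Q (Fin.snoc x ξ) = qstar (Fin.snoc x ξ)) := by
  have hSe := Se_mp μ n
  have hSeapp : ∀ p : (Fin n → E) × E, Se (E := E) n p = Fin.snoc p.1 p.2 := Se_apply n
  have hsnocm := measurable_msnoc (E := E) n
  have hinitm := measurable_init (E := E) n
  set ρ := (Measure.pi fun _ : Fin n => μ) with hρ
  set π := (Measure.pi fun _ : Fin (n + 1) => μ) with hπ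
  have hGm : Measurable fun z : (Fin n → E) × E => γc (Fin.snoc z.1 z.2) := hγcmeas.comp hsnocm
  have hQm' : Measurable fun z : (Fin n → E) × E => Q (Fin.snoc z.1 z.2) := hQmeas.comp hsnocm
  have hqstarm : Measurable qstar := by
    have hq : qstar = fun x => γc x / ∫ ξ, γc (Fin.snoc (Fin.init x) ξ) ∂μ := funext hqstar
    rw [hq]
    refine hγcmeas.div ?_
    have hm : Measurable (fun y : Fin n → E => ∫ ξ, γc (Fin.snoc y ξ) ∂μ) :=
      (hγcmeas.comp hsnocm).stronglyMeasurable.integral_prod_right'.measurable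
    exact hm.comp hinitm
  have hqsm' : Measurable fun z : (Fin n → E) × E => qstar (Fin.snoc z.1 z.2) :=
    hqstarm.comp hsnocm
  have hGi : Integrable (fun z : (Fin n → E) × E => γc (Fin.snoc z.1 z.2)) (ρ.prod μ) := by
    have h1 := hγcint
    rw [← hSe.map_eq] at h1
    have h2 := ((Se (E := E) n).measurableEmbedding.integrable_map_iff).1 h1
    exact h2.congr (ae_of_all _ fun z => by simp only [Function.comp_apply, hSeapp])
  have hZc' : Zc = ∫ z, γc (Fin.snoc z.1 z.2) ∂(ρ.prod μ) := by
    rw [hZc, ← hSe.map_eq, (Se (E := E) n).measurableEmbedding.integral_map]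
    exact integral_congr_ae (ae_of_all _ fun z => by simp only [hSeapp])
  have hqs' : ∀ z : (Fin n → E) × E,
      qstar (Fin.snoc z.1 z.2) = γc (Fin.snoc z.1 z.2) / ∫ b, γc (Fin.snoc z.1 b) ∂μ := by
    intro z
    rw [hqstar (Fin.snoc z.1 z.2), Fin.init_snoc]
  have hcore := kl_core (ρ := ρ) (μ := μ) γp
    (fun z => γc (Fin.snoc z.1 z.2)) (fun z => Q (Fin.snoc z.1 z.2))
    (fun z => qstar (Fin.snoc z.1 z.2)) hγpmeas hGm hQm' hγpnonneg
    (fun z => hγcnonneg _) (fun z => hQnonneg _) hγpint hGi hZp hZppos hZc' hZcpos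
    hmargfin hmargpos hqs' hQprob
  have hfQm : Measurable fun x : Fin (n + 1) → E => γp (Fin.init x) / Zp * Q x :=
    ((hγpmeas.comp hinitm).div_const _).mul hQmeas
  have hfSm : Measurable fun x : Fin (n + 1) → E => γp (Fin.init x) / Zp * qstar x :=
    ((hγpmeas.comp hinitm).div_const _).mul hqstarm
  have hgm : Measurable fun x : Fin (n + 1) → E => γc x / Zc := hγcmeas.div_const _
  have hKQ : KL π (fun x => γp (Fin.init x) / Zp * Q x) (fun x => γc x / Zc)
      = KL (ρ.prod μ) (fun z => γp z.1 / Zp * Q (Fin.snoc z.1 z.2))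
          (fun z => γc (Fin.snoc z.1 z.2) / Zc) := by
    rw [KL_comp (Se (E := E) n) hSe hfQm hgm]
    congr 1
    · funext z; simp only [hSeapp, Fin.init_snoc]
    · funext z; simp only [hSeapp]
  have hKS : KL π (fun x => γp (Fin.init x) / Zp * qstar x) (fun x => γc x / Zc)
      = KL (ρ.prod μ) (fun z => γp z.1 / Zp * qstar (Fin.snoc z.1 z.2))
          (fun z => γc (Fin.snoc z.1 z.2) / Zc) := by
    rw [KL_comp (Se (E := E) n) hSe hfSm hgm]
    congr 1
    · funext z; simp only [hSeapp, Fin.init_snoc]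
    · funext z; simp only [hSeapp]
  obtain ⟨hc1, hc2, hc3⟩ := hcore
  refine ⟨?_, ?_, ?_⟩
  · rw [hKQ, hKS]; exact hc1
  · rw [hKQ, hKS]; exact hc2
  · rw [hKQ, hKS]; intro heq hne; exact hc3 heq hne

end SMCTut
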